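/- arXiv:2106.12837 — 14 statements merged into one kernel-verified Lean document; each statement's English description precedes it below -/
import Mathlib

section
/- Let C be a category, W a class of morphisms of C admitting a right calculus of fractions, and S an object of C. Let W_S denote the class of those morphisms of the over-category Over S (objects: morphisms X ⟶ S of C; morphisms: commuting triangles) whose underlying morphism in C lies in W. Let L : C ⟶ C[W⁻¹] be the localization functor. Then the induced functor Over S ⟶ Over (L(S)) sends every morphism of W_S to an isomorphism, and the resulting functor (Over S)[W_S⁻¹] ⟶ Over (L(S)) is an equivalence of categories; equivalently, the functor Over S ⟶ Over (L(S)) is a localization functor with respect to W_S. -/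
open CategoryTheory

universe v₁ v₂ u₁ u₂

/-- The class of morphisms of the over-category `Over S` whose underlying morphism
lies in a given class `W` of morphisms of `C`. -/
def CategoryTheory.MorphismProperty.overProp {C : Type u₁} [Category.{v₁} C]
    (W : MorphismProperty C) (S : C) : MorphismProperty (Over S) :=
  fun _ _ f => W f.left

/-!
A morphism `L A ⟶ L B` over `L S` is a right fraction `(L s)⁻¹ ≫ L f` of `C`; since it commutes
with the structure maps, `f` and `s` become equal over `S` after `L`, hence after precomposing
with one more element of `W`, and then the fraction lives in `Over S`. Likewise two morphisms
of `Over S` identified by `L` are already equalized by an element of `W_S`. Since `W_S` again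
admits a right calculus of fractions, these two facts make the comparison functor
`(Over S)[W_S⁻¹] ⥤ Over (L S)` fully faithful, and it is essentially surjective because every
object of `D` is some `L X`.
-/

namespace CategoryTheory

variable {C D E : Type*} [Category C] [Category D] [Category E]

lemma MorphismProperty.RightFraction.map_map_of_iso {W : MorphismProperty C}
    {L : C ⥤ D} (hL : W.IsInvertedBy L) {F : C ⥤ E} (hF : W.IsInvertedBy F) (G : D ⥤ E)
    (e : L ⋙ G ≅ F) {X Y : C} (φ : W.RightFraction X Y) :
    G.map (φ.map L hL) = e.hom.app X ≫ φ.map F hF ≫ e.inv.app Y := by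
  have := hL _ φ.hs
  rw [← cancel_epi (G.map (L.map φ.s)), ← G.map_comp, φ.map_s_comp_map]
  have hs := e.hom.naturality φ.s
  have hf := e.hom.naturality φ.f
  dsimp at hs hf
  rw [reassoc_of% hs, φ.map_s_comp_map_assoc, ← reassoc_of% hf, Iso.hom_inv_id_app]
  exact (Category.comp_id _).symm

lemma Functor.faithful_of_comp_of_hasRightCalculusOfFractions (L : C ⥤ D)
    (W : MorphismProperty C) [L.IsLocalization W] [W.HasRightCalculusOfFractions] (G : D ⥤ E)
    (h : ∀ ⦃X₁ X₂ : C⦄ (f g : X₁ ⟶ X₂), G.map (L.map f) = G.map (L.map g) → L.map f = L.map g) :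
    G.Faithful := by
  have := Functor.faithful_of_comp_of_hasLeftCalculusOfFractions L.op W.op G.op
    fun _ _ f g hfg ↦ Quiver.Hom.unop_inj (h f.unop g.unop (Quiver.Hom.op_inj hfg))
  exact ⟨fun hfg ↦ Quiver.Hom.op_inj (G.op.map_injective (Quiver.Hom.unop_inj hfg))⟩

theorem Functor.isLocalization_of_exists_rightFraction (W : MorphismProperty C)
    [W.HasRightCalculusOfFractions] (F : C ⥤ E) (hF : W.IsInvertedBy F) [F.EssSurj]
    (exists_rightFraction : ∀ ⦃X Y : C⦄ (f : F.obj X ⟶ F.obj Y),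
      ∃ φ : W.RightFraction X Y, f = φ.map F hF)
    (areEqualizedByLocalization : ∀ ⦃X Y : C⦄ (f g : X ⟶ Y), F.map f = F.map g →
      AreEqualizedByLocalization W f g) :
    F.IsLocalization W := by
  let G := Localization.lift F hF W.Q
  let e : W.Q ⋙ G ≅ F := Localization.fac F hF W.Q
  have : G.Faithful := Functor.faithful_of_comp_of_hasRightCalculusOfFractions W.Q W G
    fun _ _ f g hfg ↦ areEqualizedByLocalization f g (by
      simpa only [Functor.comp_map, ← NatIso.naturality_1 e f, ← NatIso.naturality_1 e g] using
        e.inv.app _ ≫= hfg =≫ e.hom.app _)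
  have : G.Full := G.full_of_comp_essSurj W.Q fun X Y f ↦ by
    obtain ⟨φ, hφ⟩ := exists_rightFraction (e.inv.app X ≫ f ≫ e.hom.app Y)
    refine ⟨φ.map W.Q (Localization.inverts W.Q W), ?_⟩
    rw [φ.map_map_of_iso _ hF G e, ← hφ]
    simp
  have : G.EssSurj := ⟨fun Z ↦ ⟨W.Q.obj (F.objPreimage Z), ⟨e.app _ ≪≫ F.objObjPreimageIso Z⟩⟩⟩
  have : G.IsEquivalence := {}
  exact Functor.IsLocalization.of_equivalence_target W.Q W F G.asEquivalence e

lemma Localization.exists_rightFraction_of_comp_map_eq (L : C ⥤ D) (W : MorphismProperty C)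
    [L.IsLocalization W] [W.HasRightCalculusOfFractions] {X Y Z : C} (f : L.obj X ⟶ L.obj Y)
    (a : X ⟶ Z) (b : Y ⟶ Z) (h : f ≫ L.map b = L.map a) :
    ∃ φ : W.RightFraction X Y, f = φ.map L (Localization.inverts L W) ∧ φ.f ≫ b = φ.s ≫ a := by
  obtain ⟨φ, rfl⟩ := Localization.exists_rightFraction L W f
  have hL : L.map (φ.f ≫ b) = L.map (φ.s ≫ a) := by
    rw [L.map_comp, L.map_comp, ← h, φ.map_s_comp_map_assoc]
  obtain ⟨_, t, ht, hfac⟩ := (MorphismProperty.map_eq_iff_precomp L W _ _).1 hL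
  let ψ := MorphismProperty.RightFraction.mk (t ≫ φ.s) (W.comp_mem _ _ ht φ.hs) (t ≫ φ.f)
  have := Localization.inverts L W _ ψ.hs
  refine ⟨ψ, ?_, by simpa [ψ] using hfac⟩
  rw [← cancel_epi (L.map ψ.s), ψ.map_s_comp_map, L.map_comp, L.map_comp,
    Category.assoc, φ.map_s_comp_map]

section

variable (W : MorphismProperty C) (S : C)

instance [W.IsMultiplicative] : (W.overProp S).IsMultiplicative :=
  inferInstanceAs (W.inverseImage (Over.forget S)).IsMultiplicative

variable {W S} in
def MorphismProperty.RightFraction.over {A B : Over S} (φ : W.RightFraction A.left B.left)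
    (h : φ.f ≫ B.hom = φ.s ≫ A.hom) : (W.overProp S).RightFraction A B where
  -- inside `MorphismProperty`, a bare `Over` would mean `MorphismProperty.Over`
  X' := CategoryTheory.Over.mk (φ.s ≫ A.hom)
  s := CategoryTheory.Over.homMk φ.s
  hs := φ.hs
  f := CategoryTheory.Over.homMk φ.f h

instance [W.HasRightCalculusOfFractions] : (W.overProp S).HasRightCalculusOfFractions where
  exists_rightFraction A B φ := by
    obtain ⟨ψ, hψ⟩ :=
      (MorphismProperty.LeftFraction.mk φ.f.left φ.s.left φ.hs).exists_rightFraction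
    have h : ψ.f ≫ B.hom = ψ.s ≫ A.hom := by
      rw [← Over.w φ.s, ← Over.w φ.f, ← Category.assoc, ← hψ, Category.assoc]
    exact ⟨ψ.over h, by ext; exact hψ⟩
  ext A B B' f₁ f₂ s hs hfac := by
    obtain ⟨Z, t, ht, hfac'⟩ := MorphismProperty.HasRightCalculusOfFractions.ext
      f₁.left f₂.left s.left hs (by rw [← Over.comp_left, hfac, Over.comp_left])
    exact ⟨Over.mk (t ≫ A.hom), Over.homMk t, ht, by ext; simpa using hfac'⟩

end

section

variable (W : MorphismProperty C) (L : C ⥤ D) [L.IsLocalization W] (S : C)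

lemma isInvertedBy_overProp_post : (W.overProp S).IsInvertedBy (Over.post L) := fun _ _ f hf ↦
  have : IsIso ((Over.forget _).map ((Over.post L).map f)) := Localization.inverts L W _ hf
  isIso_of_reflects_iso _ (Over.forget _)

lemma essSurj_over_post [W.HasRightCalculusOfFractions] : (Over.post (X := S) L).EssSurj where
  mem_essImage Y := by
    have := Localization.essSurj L W
    obtain ⟨φ, hφ⟩ := Localization.exists_rightFraction L W
      ((L.objObjPreimageIso Y.left).hom ≫ Y.hom)
    refine ⟨Over.mk φ.f, ⟨Over.isoMk (Localization.isoOfHom L W φ.s φ.hs ≪≫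
      L.objObjPreimageIso Y.left) ?_⟩⟩
    show (L.map φ.s ≫ (L.objObjPreimageIso Y.left).hom) ≫ Y.hom = L.map φ.f
    rw [Category.assoc, hφ, φ.map_s_comp_map]

variable [W.HasRightCalculusOfFractions]

lemma exists_rightFraction_over_post {A B : Over S}
    (f : (Over.post L).obj A ⟶ (Over.post L).obj B) :
    ∃ φ : (W.overProp S).RightFraction A B,
      f = φ.map (Over.post L) (isInvertedBy_overProp_post W L S) := by
  obtain ⟨φ, hφ, hw⟩ :=
    Localization.exists_rightFraction_of_comp_map_eq L W f.left A.hom B.hom (Over.w f)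
  have := isInvertedBy_overProp_post W L S _ (φ.over hw).hs
  refine ⟨φ.over hw, ?_⟩
  rw [← cancel_epi ((Over.post L).map (φ.over hw).s),
    MorphismProperty.RightFraction.map_s_comp_map]
  ext
  simp only [Over.comp_left, hφ]
  exact φ.map_s_comp_map L _

lemma areEqualizedByLocalization_of_over_post_map_eq {A B : Over S} (f g : A ⟶ B)
    (h : (Over.post L).map f = (Over.post L).map g) :
    AreEqualizedByLocalization (W.overProp S) f g := by
  obtain ⟨_, t, ht, hfac⟩ :=
    (MorphismProperty.map_eq_iff_precomp L W f.left g.left).1 (congr_arg (·.left) h)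
  exact (MorphismProperty.map_eq_iff_precomp (W.overProp S).Q (W.overProp S) f g).2
    ⟨Over.mk (t ≫ A.hom), Over.homMk t, ht, by ext; exact hfac⟩

end

end CategoryTheory

/-- If `W` admits a right calculus of fractions and `L : C ⥤ D` is a localization functor
with respect to `W`, then the induced functor `Over S ⥤ Over (L.obj S)` inverts the class
`W_S` of morphisms of `Over S` lying in `W`, and is a localization functor with respect
to `W_S`; in particular `(Over S)[W_S⁻¹] ≃ Over (L.obj S)`. -/
theorem over_post_isLocalization
    {C : Type u₁} {D : Type u₂} [Category.{v₁} C] [Category.{v₂} D]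
    (W : MorphismProperty C) [W.HasRightCalculusOfFractions]
    (L : C ⥤ D) [L.IsLocalization W] (S : C) :
    (W.overProp S).IsInvertedBy (Over.post (X := S) L) ∧
      (Over.post (X := S) L).IsLocalization (W.overProp S) := by
  have := essSurj_over_post W L S
  exact ⟨isInvertedBy_overProp_post W L S,
    Functor.isLocalization_of_exists_rightFraction _ _ _
      (fun _ _ ↦ exists_rightFraction_over_post W L S)
      (fun _ _ ↦ areEqualizedByLocalization_of_over_post_map_eq W L S)⟩
end

section
/- Let A be a commutative ring such that every monic polynomial of positive degree with coefficients in A has a root in A. Then for every prime ideal 𝔭 of A, the residue field at 𝔭 (i.e., the fraction field of the integral domain A/𝔭) is algebraically closed. -/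
/-!
The property that every monic polynomial of positive degree has a root passes to quotients,
since a monic polynomial over a quotient lifts to a monic polynomial of the same degree, and to
localizations, since scaling the roots of a monic polynomial by a common denominator of its
coefficients gives a monic polynomial with integral coefficients. Hence it holds for the
fraction field of `A ⧸ 𝔭`, and a field with this property is algebraically closed.
-/

open Polynomial

def HasMonicRoots (A : Type*) [CommRing A] : Prop :=
  ∀ f : A[X], f.Monic → 0 < f.degree → ∃ a : A, f.eval a = 0

namespace HasMonicRoots

theorem of_surjective {A B : Type*} [CommRing A] [CommRing B] (hA : HasMonicRoots A)
    {φ : A →+* B} (hφ : Function.Surjective φ) : HasMonicRoots B := by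
  intro q hq hdeg
  have : Nontrivial B := Nontrivial.of_polynomial_ne (ne_zero_of_degree_gt hdeg)
  have hlifts : q ∈ lifts φ := (lifts_iff_coeff_lifts q).mpr fun n ↦ hφ (q.coeff n)
  obtain ⟨p, rfl, hpdeg, hp⟩ := lifts_and_degree_eq_and_monic hlifts hq
  obtain ⟨a, ha⟩ := hA p hp (hpdeg ▸ hdeg)
  exact ⟨φ a, by rw [eval_map, eval₂_hom, ha, map_zero]⟩

theorem of_isLocalization {R S : Type*} [CommRing R] [CommRing S] [Algebra R S]
    (M : Submonoid R) [IsLocalization M S] (hR : HasMonicRoots R) : HasMonicRoots S := by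
  intro p hp hdeg
  have : Nontrivial S := Nontrivial.of_polynomial_ne (ne_zero_of_degree_gt hdeg)
  set d := IsLocalization.commonDenom M p.support p.coeff
  have hd : IsUnit (algebraMap R S d) := IsLocalization.map_units S d
  have hlifts := IsLocalization.scaleRoots_commonDenom_mem_lifts M p
    (hp.leadingCoeff ▸ ⟨1, map_one _⟩)
  obtain ⟨q, hq, hqdeg, hqmonic⟩ :=
    lifts_and_degree_eq_and_monic hlifts ((monic_scaleRoots_iff _).mpr hp)
  obtain ⟨r, hr⟩ := hR q hqmonic (by rwa [hqdeg, degree_scaleRoots])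
  refine ⟨hd.unit⁻¹ * algebraMap R S r, ?_⟩
  have hscaled := scaleRoots_eval_mul p (hd.unit⁻¹ * algebraMap R S r) (algebraMap R S d)
  rw [← mul_assoc, IsUnit.mul_val_inv, one_mul, ← hq, eval_map, eval₂_hom, hr, map_zero]
    at hscaled
  exact (hd.pow _).mul_right_eq_zero.mp hscaled.symm

theorem isAlgClosed {K : Type*} [Field K] (hK : HasMonicRoots K) : IsAlgClosed K :=
  IsAlgClosed.of_exists_root _ fun p hp hirr ↦ hK p hp (degree_pos_of_irreducible hirr)

end HasMonicRoots

/-- If every monic polynomial of positive degree over a commutative ring `A` has a root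
in `A`, then the residue field at every prime ideal of `A` (the fraction field of `A ⧸ 𝔭`)
is algebraically closed. -/
theorem isAlgClosed_residueField_of_monic_root
    {A : Type*} [CommRing A]
    (h : ∀ f : Polynomial A, f.Monic → 0 < f.degree → ∃ a : A, f.eval a = 0)
    (𝔭 : Ideal A) [𝔭.IsPrime] :
    IsAlgClosed (FractionRing (A ⧸ 𝔭)) :=
  have hquot : HasMonicRoots (A ⧸ 𝔭) :=
    HasMonicRoots.of_surjective h Ideal.Quotient.mk_surjective
  (hquot.of_isLocalization (nonZeroDivisors (A ⧸ 𝔭))).isAlgClosed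
end

section
/- Let A be an integrally closed domain whose fraction field is algebraically closed. Let B be an A-algebra which is finite as an A-module and such that the structure homomorphism A → B is injective. Then there exists an A-algebra homomorphism B → A. -/
/-!
Pick a prime `Q` of `B` lying over `0` (going up); `B ⧸ Q` is a domain, integral over `A`,
into which `A` still injects. Each `c ∈ B ⧸ Q` has a minimal polynomial over `A` that is
irreducible, hence (Gauss's lemma, `A` being integrally closed) irreducible over the
algebraically closed field `Frac A`, hence linear; so `c ∈ A`. Thus `A ≅ B ⧸ Q`, and
`B → B ⧸ Q ≅ A` is the required retraction.
-/

theorem minpoly.degree_eq_one_of_isIntegrallyClosed {A C : Type*} (K : Type*) [CommRing A]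
    [IsDomain A] [IsIntegrallyClosed A] [Field K] [Algebra A K] [IsFractionRing A K]
    [IsAlgClosed K] [CommRing C] [IsDomain C] [Algebra A C] {c : C} (hc : IsIntegral A c) :
    (minpoly A c).degree = 1 := by
  have hirr : Irreducible ((minpoly A c).map (algebraMap A K)) :=
    (minpoly.monic hc).irreducible_iff_irreducible_map_fraction_map.mp (minpoly.irreducible hc)
  rw [← (minpoly.monic hc).degree_map (algebraMap A K)]
  exact IsAlgClosed.degree_eq_one_of_irreducible K hirr

theorem IsIntegrallyClosed.algebraMap_surjective_of_isIntegral {A C : Type*} (K : Type*)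
    [CommRing A] [IsDomain A] [IsIntegrallyClosed A] [Field K] [Algebra A K]
    [IsFractionRing A K] [IsAlgClosed K] [CommRing C] [IsDomain C] [Algebra A C]
    [Algebra.IsIntegral A C] : Function.Surjective (algebraMap A C) := fun c =>
  minpoly.mem_range_of_degree_eq_one A c <|
    minpoly.degree_eq_one_of_isIntegrallyClosed K (Algebra.IsIntegral.isIntegral c)

theorem Ideal.Quotient.algebraMap_injective_of_comap_eq_bot {A B : Type*} [CommRing A]
    [CommRing B] [Algebra A B] {Q : Ideal B} (hQ : Q.comap (algebraMap A B) = ⊥) :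
    Function.Injective (algebraMap A (B ⧸ Q)) := by
  rw [RingHom.injective_iff_ker_eq_bot, IsScalarTower.algebraMap_eq A B (B ⧸ Q),
    Ideal.Quotient.algebraMap_eq, ← RingHom.comap_ker, Ideal.mk_ker, hQ]

/-- Let `A` be an integrally closed domain whose fraction field is algebraically closed,
and let `B` be an `A`-algebra which is finite as an `A`-module and such that `A → B` is
injective.  Then there exists an `A`-algebra homomorphism `B → A`. -/
theorem exists_algHom_to_base_of_finite
    {A B : Type*} [CommRing A] [IsDomain A] [IsIntegrallyClosed A]
    [IsAlgClosed (FractionRing A)]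
    [CommRing B] [Algebra A B] [Module.Finite A B]
    (hinj : Function.Injective (algebraMap A B)) :
    Nonempty (B →ₐ[A] A) := by
  have : Algebra.IsIntegral A B := Algebra.IsIntegral.of_finite A B
  have hker : RingHom.ker (algebraMap A B) = ⊥ := (RingHom.injective_iff_ker_eq_bot _).mp hinj
  obtain ⟨Q, -, hQ, hQ_over_bot⟩ := Ideal.exists_ideal_over_prime_of_isIntegral (⊥ : Ideal A)
    (⊥ : Ideal B) (by rw [← RingHom.ker_eq_comap_bot, hker])
  let e : A ≃ₐ[A] B ⧸ Q := AlgEquiv.ofBijective (Algebra.ofId A (B ⧸ Q))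
    ⟨Ideal.Quotient.algebraMap_injective_of_comap_eq_bot hQ_over_bot,
      IsIntegrallyClosed.algebraMap_surjective_of_isIntegral (FractionRing A)⟩
  exact ⟨e.symm.toAlgHom.comp (Ideal.Quotient.mkₐ A Q)⟩
end

section
/- Let A be an integrally closed domain whose fraction field is algebraically closed. Let {fᵢ : Yᵢ ⟶ Spec A}_{i ∈ ι} be a family of finite morphisms of schemes which is jointly surjective (every point of Spec A lies in the image of some fᵢ). Then there exist an index i and a morphism s : Spec A ⟶ Yᵢ with fᵢ ∘ s = id. -/
/-!
Some `Yᵢ` meets the fibre over the generic point of `Spec A`, and `Yᵢ` is affine, so `B = Γ(Yᵢ)`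
is an integral `A`-algebra with a prime `q` lying over `0`. The domain `B ⧸ q` is then integral
over the subring `A`, so it embeds over `A` into the algebraically closed field `Frac A`.
Its image consists of elements integral over `A`, hence lies in `A`: this gives an `A`-algebra
retraction `B → A`, i.e. a section of `Yᵢ → Spec A`.
-/

open CategoryTheory AlgebraicGeometry

universe u

section Algebra

variable {R S K : Type*} [CommRing R] [CommRing S] [Algebra R S]
  [Field K] [Algebra R K] [IsFractionRing R K]

theorem IsIntegrallyClosed.nonempty_algHom_self_of_algHom_fractionRing [IsDomain R]
    [IsIntegrallyClosed R] [Algebra.IsIntegral R S] (φ : S →ₐ[R] K) : Nonempty (S →ₐ[R] R) :=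
  ⟨(Algebra.botEquivOfInjective (IsFractionRing.injective R K)).toAlgHom.comp <|
    (Subalgebra.equivOfEq _ _ (IsIntegrallyClosed.integralClosure_eq_bot R K)).toAlgHom.comp <|
      φ.codRestrict _ fun s ↦ (Algebra.IsIntegral.isIntegral s).map φ⟩

variable (K) in
theorem IsIntegrallyClosed.nonempty_algHom_self_of_isAlgClosed [IsDomain R] [IsIntegrallyClosed R]
    [IsAlgClosed K] [IsDomain S] [FaithfulSMul R S] [Algebra.IsIntegral R S] :
    Nonempty (S →ₐ[R] R) :=
  nonempty_algHom_self_of_algHom_fractionRing (K := K) IsAlgClosed.lift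

theorem Ideal.faithfulSMul_quotient_of_under_eq_bot {q : Ideal S} (hq : q.under R = ⊥) :
    FaithfulSMul R (S ⧸ q) := by
  rw [faithfulSMul_iff_algebraMap_injective, RingHom.injective_iff_ker_eq_bot,
    ← Ideal.Quotient.mk_comp_algebraMap, ← RingHom.comap_ker, Ideal.mk_ker]
  exact hq

variable (K) in
theorem IsIntegrallyClosed.nonempty_algHom_self_of_isAlgClosed_of_under_eq_bot [IsDomain R]
    [IsIntegrallyClosed R] [IsAlgClosed K] [Algebra.IsIntegral R S] (q : Ideal S) [q.IsPrime]
    (hq : q.under R = ⊥) : Nonempty (S →ₐ[R] R) :=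
  have := Ideal.faithfulSMul_quotient_of_under_eq_bot hq
  (nonempty_algHom_self_of_isAlgClosed K).map (·.comp (Ideal.Quotient.mkₐ R q))

end Algebra

namespace AlgebraicGeometry

lemma Scheme.toSpecΓ_comp_Spec_map_appTop {X : Scheme.{u}} {R : CommRingCat.{u}}
    (f : X ⟶ Spec R) : X.toSpecΓ ≫ Spec.map ((Scheme.ΓSpecIso R).inv ≫ f.appTop) = f := by
  rw [Spec.map_comp, ← Scheme.toSpecΓ_naturality_assoc, toSpecΓ_SpecMap_ΓSpecIso_inv,
    Category.comp_id]

lemma Scheme.Hom.exists_section_of_retraction {Y : Scheme.{u}} [IsAffine Y] {R : CommRingCat.{u}}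
    (f : Y ⟶ Spec R) (ψ : Γ(Y, ⊤) ⟶ R) (hψ : (Scheme.ΓSpecIso R).inv ≫ f.appTop ≫ ψ = 𝟙 R) :
    ∃ s : Spec R ⟶ Y, s ≫ f = 𝟙 _ := by
  refine ⟨Spec.map ψ ≫ inv Y.toSpecΓ, ?_⟩
  rw [← Scheme.toSpecΓ_comp_Spec_map_appTop f, Category.assoc, IsIso.inv_hom_id_assoc,
    ← Spec.map_comp, Category.assoc, hψ, Spec.map_id]

lemma Scheme.Hom.isIntegral_ΓSpecIso_inv_comp_appTop {Y : Scheme.{u}} {R : CommRingCat.{u}}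
    (f : Y ⟶ Spec R) [IsIntegralHom f] : ((Scheme.ΓSpecIso R).inv ≫ f.appTop).hom.IsIntegral := by
  have : IsAffine Y := isAffine_of_isAffineHom f
  rw [← IsIntegralHom.SpecMap_iff, ← IsIso.inv_hom_id_assoc Y.toSpecΓ (Spec.map _),
    Scheme.toSpecΓ_comp_Spec_map_appTop]
  infer_instance

theorem Scheme.Hom.exists_section_of_isIntegralHom_of_asIdeal_eq_bot {A : Type u} [CommRing A]
    [IsDomain A] [IsIntegrallyClosed A] [IsAlgClosed (FractionRing A)] {Y : Scheme.{u}}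
    (f : Y ⟶ Spec (CommRingCat.of A)) [IsIntegralHom f] (y : Y) (hy : (f.base y).asIdeal = ⊥) :
    ∃ s, s ≫ f = 𝟙 _ := by
  have : IsAffine Y := isAffine_of_isAffineHom f
  let : Algebra A Γ(Y, ⊤) := ((Scheme.ΓSpecIso (.of A)).inv ≫ f.appTop).hom.toAlgebra
  have : Algebra.IsIntegral A Γ(Y, ⊤) := ⟨f.isIntegral_ΓSpecIso_inv_comp_appTop⟩
  have : (Y.toSpecΓ.base y).asIdeal.IsPrime := (Y.toSpecΓ.base y).isPrime
  have hq : (Y.toSpecΓ.base y).asIdeal.under A = ⊥ := by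
    rw [← hy, ← Scheme.toSpecΓ_comp_Spec_map_appTop f]
    rfl
  obtain ⟨ψ⟩ :=
    IsIntegrallyClosed.nonempty_algHom_self_of_isAlgClosed_of_under_eq_bot (FractionRing A) _ hq
  exact f.exists_section_of_retraction (CommRingCat.ofHom ψ.toRingHom) (by ext; exact ψ.commutes _)

end AlgebraicGeometry

/-- Let `A` be an integrally closed domain whose fraction field is algebraically closed,
and let `{fᵢ : Yᵢ ⟶ Spec A}` be a jointly surjective family of finite morphisms of
schemes.  Then some `fᵢ` admits a section. -/
theorem exists_section_of_jointly_surjective_finite_family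
    {A : Type u} [CommRing A] [IsDomain A] [IsIntegrallyClosed A]
    [IsAlgClosed (FractionRing A)]
    {ι : Type*} (Y : ι → Scheme.{u}) (f : ∀ i, Y i ⟶ Spec (CommRingCat.of A))
    (hfin : ∀ i, IsFinite (f i))
    (hsurj : ∀ x : Spec (CommRingCat.of A), ∃ (i : ι) (y : Y i), (f i).base y = x) :
    ∃ (i : ι) (s : Spec (CommRingCat.of A) ⟶ Y i),
      s ≫ f i = 𝟙 (Spec (CommRingCat.of A)) := by
  obtain ⟨i, y, hy⟩ := hsurj ⟨⊥, Ideal.isPrime_bot (α := A)⟩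
  have := hfin i
  exact ⟨i, (f i).exists_section_of_isIntegralHom_of_asIdeal_eq_bot y (by rw [hy])⟩
end

section
/- Let C be a category and W a class of morphisms of C admitting a right calculus of fractions, and let L : C ⟶ C[W⁻¹] be the localization functor. Then for every object X of C, the structured-arrow category whose objects are pairs (Y ∈ C, a morphism L(X) ⟶ L(Y) in C[W⁻¹]) and whose morphisms (Y, a) → (Y', a') are morphisms u : Y → Y' in C with L(u) ∘ a = a', is cofiltered (it is nonempty, any two objects admit an object mapping to both, and any parallel pair of morphisms is equalized by some morphism into its source). -/
open CategoryTheory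

/-- Auxiliary lemma: `(isoOfHom (t ≫ s)).inv ≫ L.map (t ≫ f)` computes the map of the
fraction `(s, f)`. -/
lemma rightFraction_aux {C D : Type*} [Category C] [Category D]
    (W : MorphismProperty C) [W.HasRightCalculusOfFractions]
    (L : C ⥤ D) [L.IsLocalization W] {X Y P : C}
    (φ : W.RightFraction X Y) (t : P ⟶ φ.X') (g : P ⟶ Y) (hst : W (t ≫ φ.s))
    (hg : t ≫ φ.f = g) :
    (Localization.isoOfHom L W (t ≫ φ.s) hst).inv ≫ L.map g =
      φ.map L (Localization.inverts L W) := by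
  rw [← cancel_epi (Localization.isoOfHom L W (t ≫ φ.s) hst).hom, Iso.hom_inv_id_assoc]
  subst hg
  simp only [Localization.isoOfHom_hom, Functor.map_comp, Category.assoc,
    CategoryTheory.MorphismProperty.RightFraction.map_s_comp_map]

/-- If `W` admits a right calculus of fractions and `L : C ⥤ D` is a localization functor
with respect to `W`, then for every object `X` of `C` the structured-arrow category of
pairs `(Y, L.obj X ⟶ L.obj Y)` is cofiltered. -/
theorem structuredArrow_isCofiltered_of_hasRightCalculusOfFractions
    {C D : Type*} [Category C] [Category D]
    (W : MorphismProperty C) [W.HasRightCalculusOfFractions]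
    (L : C ⥤ D) [L.IsLocalization W] (X : C) :
    IsCofiltered (StructuredArrow (L.obj X) L) := by
  have hW := Localization.inverts L W
  refine { toIsCofilteredOrEmpty := ⟨?_, ?_⟩,
           nonempty := ⟨StructuredArrow.mk (𝟙 (L.obj X))⟩ }
  · intro A B
    obtain ⟨φ, hφ⟩ := Localization.exists_rightFraction L W A.hom
    obtain ⟨ψ, hψ⟩ := Localization.exists_rightFraction L W B.hom
    obtain ⟨ρ, hρ⟩ := (MorphismProperty.LeftFraction.mk ψ.s φ.s φ.hs).exists_rightFraction
    dsimp at hρ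
    have hst : W (ρ.s ≫ ψ.s) := W.comp_mem _ _ ρ.hs ψ.hs
    have hst' : W (ρ.f ≫ φ.s) := by rwa [← hρ]
    refine ⟨StructuredArrow.mk (Localization.isoOfHom L W (ρ.s ≫ ψ.s) hst).inv,
      StructuredArrow.homMk (ρ.f ≫ φ.f) ?_, StructuredArrow.homMk (ρ.s ≫ ψ.f) ?_, trivial⟩
    · dsimp
      rw [hφ]
      have : (Localization.isoOfHom L W (ρ.s ≫ ψ.s) hst).inv =
          (Localization.isoOfHom L W (ρ.f ≫ φ.s) hst').inv := by
        rw [← cancel_mono (Localization.isoOfHom L W (ρ.s ≫ ψ.s) hst).hom,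
          Iso.inv_hom_id, Localization.isoOfHom_hom, hρ,
          Localization.isoOfHom_inv_hom_id]
      rw [this]
      exact rightFraction_aux W L φ ρ.f (ρ.f ≫ φ.f) hst' rfl
    · dsimp
      rw [hψ]
      exact rightFraction_aux W L ψ ρ.s (ρ.s ≫ ψ.f) hst rfl
  · intro A B u v
    obtain ⟨φ, hφ⟩ := Localization.exists_rightFraction L W A.hom
    have h1 : L.map (φ.f ≫ u.right) = L.map (φ.f ≫ v.right) := by
      have hu := StructuredArrow.w u
      have hv := StructuredArrow.w v
      rw [hφ] at hu hv
      simp only [Functor.map_comp,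
        ← MorphismProperty.RightFraction.map_s_comp_map_assoc φ L hW, hu, hv]
    rw [MorphismProperty.map_eq_iff_precomp L W] at h1
    obtain ⟨P, p, hp, fac⟩ := h1
    have hps : W (p ≫ φ.s) := W.comp_mem _ _ hp φ.hs
    refine ⟨StructuredArrow.mk (Localization.isoOfHom L W (p ≫ φ.s) hps).inv,
      StructuredArrow.homMk (p ≫ φ.f) ?_, ?_⟩
    · dsimp
      rw [hφ]
      exact rightFraction_aux W L φ p (p ≫ φ.f) hps rfl
    · ext
      dsimp
      simpa only [Category.assoc] using fac
end

section
/- Let C be a category and W a class of morphisms of C admitting a right calculus of fractions, such that every morphism in W is a monomorphism. Then: (i) the collection J assigning to each object X the set of sieves on X that contain at least one morphism of W with target X is a Grothendieck topology on C; (ii) a presheaf of sets F on C is a sheaf for J if and only if F sends every morphism of W to a bijection. -/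
open CategoryTheory

universe w v u

/-- The Ore condition for a right calculus of fractions. -/
lemma ore_square {C : Type u} [Category.{v} C] (W : MorphismProperty C)
    [W.HasRightCalculusOfFractions] {X Y Z : C} (s : Y ⟶ X) (hs : W s) (g : Z ⟶ X) :
    ∃ (Z' : C) (t : Z' ⟶ Z) (h : Z' ⟶ Y), W t ∧ t ≫ g = h ≫ s := by
  obtain ⟨ψ, hψ⟩ := MorphismProperty.HasRightCalculusOfFractions.exists_rightFraction
    (MorphismProperty.LeftFraction.mk g s hs)
  exact ⟨ψ.X', ψ.s, ψ.f, ψ.hs, hψ⟩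

/-- Let `W` be a class of morphisms of `C` admitting a right calculus of fractions and
consisting of monomorphisms.  Then (i) the sieves containing at least one morphism of `W`
form a Grothendieck topology `J`, and (ii) a presheaf of sets is a `J`-sheaf if and only
if it sends every morphism of `W` to a bijection. -/
theorem exists_grothendieckTopology_sheaf_iff_isLocal
    {C : Type u} [Category.{v} C] (W : MorphismProperty C)
    [W.HasRightCalculusOfFractions]
    (hmono : ∀ ⦃X Y : C⦄ (f : X ⟶ Y), W f → Mono f) :
    ∃ J : GrothendieckTopology C,
      (∀ (X : C) (S : Sieve X), S ∈ J X ↔ ∃ (Y : C) (f : Y ⟶ X), W f ∧ S.arrows f) ∧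
      ∀ (F : Cᵒᵖ ⥤ Type w), Presieve.IsSheaf J F ↔
        ∀ ⦃X Y : C⦄ (f : X ⟶ Y), W f → Function.Bijective (F.map f.op) := by
  refine ⟨{
    sieves := fun X => {S | ∃ (Y : C) (f : Y ⟶ X), W f ∧ S.arrows f}
    top_mem' := fun X => ⟨X, 𝟙 X, W.id_mem X, trivial⟩
    pullback_stable' := by
      rintro X Z S g ⟨Y, f, hf, hfS⟩
      obtain ⟨Z', t, h, ht, fac⟩ := ore_square W f hf g
      exact ⟨Z', t, ht, show S.arrows (t ≫ g) from fac ▸ S.downward_closed hfS h⟩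
    transitive' := by
      rintro X S ⟨Y, f, hf, hfS⟩ R hR
      obtain ⟨Z, g, hg, hgR⟩ := hR hfS
      exact ⟨Z, g ≫ f, W.comp_mem _ _ hg hf, hgR⟩ }, fun X S => Iff.rfl, ?_⟩
  intro F
  constructor
  · -- sheaf → inverts W
    intro hF X Y f hf
    have hmf := hmono f hf
    have hcov : ∃ (Z : C) (g : Z ⟶ Y), W g ∧
        (Sieve.generate (Presieve.singleton f)).arrows g :=
      ⟨X, f, hf, ⟨X, 𝟙 X, f, Presieve.singleton.mk, Category.id_comp f⟩⟩
    have hsheaf := hF (Sieve.generate (Presieve.singleton f)) hcov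
    constructor
    · -- injective
      intro a b hab
      -- a and b both amalgamate the family g ↦ F.map g.op a
      have : ∀ {Z : C} (g : Z ⟶ Y),
          (Sieve.generate (Presieve.singleton f)).arrows g →
          F.map g.op a = F.map g.op b := by
        rintro Z g ⟨T, h, f', hf', fac⟩
        cases hf'
        rw [← fac]
        simp only [op_comp, FunctorToTypes.map_comp_apply]
        rw [hab]
      let x : Presieve.FamilyOfElements F (Sieve.generate (Presieve.singleton f)).arrows :=
        fun Z g hg => F.map g.op a
      have hx : x.Compatible := by
        intro Z₁ Z₂ T g₁ g₂ p₁ p₂ h₁ h₂ comm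
        simp only [x, ← FunctorToTypes.map_comp_apply, ← op_comp, comm]
      have ha : x.IsAmalgamation a := fun Z g hg => rfl
      have hb : x.IsAmalgamation b := fun Z g hg => (this g hg).symm
      exact (hsheaf x hx).unique ha hb
    · -- surjective
      intro y
      -- build a compatible family on the generated sieve using monomorphy of f
      have hex : ∀ {Z : C} (g : Z ⟶ Y),
          (Sieve.generate (Presieve.singleton f)).arrows g → ∃ h : Z ⟶ X, h ≫ f = g := by
        rintro Z g ⟨T, h, l, hl, fac⟩
        cases hl
        exact ⟨h, fac⟩
      let x : Presieve.FamilyOfElements F (Sieve.generate (Presieve.singleton f)).arrows :=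
        fun Z g hg => F.map (hex g hg).choose.op y
      have hfac : ∀ {Z : C} (g : Z ⟶ Y)
          (hg : (Sieve.generate (Presieve.singleton f)).arrows g),
          (hex g hg).choose ≫ f = g := fun g hg => (hex g hg).choose_spec
      have hx : x.Compatible := by
        intro Z₁ Z₂ T p₁ p₂ g₁ g₂ h₁ h₂ comm
        have e1 := hfac g₁ h₁
        have e2 := hfac g₂ h₂
        have : (p₁ ≫ (hex g₁ h₁).choose) ≫ f = (p₂ ≫ (hex g₂ h₂).choose) ≫ f := by
          rw [Category.assoc, Category.assoc, e1, e2, comm]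
        have := (cancel_mono f).mp this
        simp only [x, ← FunctorToTypes.map_comp_apply, ← op_comp, this]
      obtain ⟨t, ht, -⟩ := hsheaf x hx
      refine ⟨t, ?_⟩
      have hfin : (Sieve.generate (Presieve.singleton f)).arrows f :=
        ⟨X, 𝟙 X, f, Presieve.singleton.mk, Category.id_comp f⟩
      have := ht f hfin
      rw [this]
      -- x f hfin = F.map (choice).op y where choice ≫ f = f, so choice = 𝟙 by mono
      have e := hfac f hfin
      have : (hex f hfin).choose = 𝟙 X := by
        have : (hex f hfin).choose ≫ f = 𝟙 X ≫ f := by rw [e, Category.id_comp]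
        exact (cancel_mono f).mp this
      simp only [x, this, op_id, FunctorToTypes.map_id_apply]
  · -- inverts W → sheaf
    intro hW X S hS
    obtain ⟨Y, f, hf, hfS⟩ := hS
    intro x hx
    have hbij := hW f hf
    -- candidate amalgamation
    obtain ⟨t, ht⟩ := hbij.2 (x f hfS)
    refine ⟨t, ?_, ?_⟩
    · intro Z g hg
      have hbs : ∀ {A B : C} (s : A ⟶ B), W s → Function.Bijective (F.map s.op) :=
        fun s hs => hW s hs
      obtain ⟨Z', u, h, hu, fac⟩ := ore_square W f hf g
      apply (hbs u hu).1
      have comm : h ≫ f = u ≫ g := fac.symm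
      calc F.map u.op (F.map g.op t)
          = F.map (u ≫ g).op t := by rw [op_comp, FunctorToTypes.map_comp_apply]
        _ = F.map (h ≫ f).op t := by rw [comm]
        _ = F.map h.op (F.map f.op t) := by rw [op_comp, FunctorToTypes.map_comp_apply]
        _ = F.map h.op (x f hfS) := by rw [ht]
        _ = F.map u.op (x g hg) := hx h u hfS hg comm
    · intro t' ht'
      apply hbij.1
      rw [ht, ht' f hfS]
end

section
/- Let A be a commutative ring and f ∈ A a nonzerodivisor. Suppose that for every valuation ring V and every ring homomorphism φ : A → V with φ(f) ≠ 0, the element φ(f) is a unit of V. Then f is a unit of A. -/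
/-!
If `f` is not a unit, it lies in a maximal ideal `m`, which contains a minimal prime `q`.
Minimal primes consist of zero divisors, so `f ∉ q` and the image of `f` in the domain `A ⧸ q`
is a nonzero nonunit. A valuation ring of `Frac (A ⧸ q)` dominating the localization of `A ⧸ q`
at a maximal ideal containing that image keeps it a nonzero nonunit.
-/

universe u

theorem Ideal.Quotient.not_isUnit_mk_of_mem {R : Type*} [CommRing R] {I J : Ideal R}
    (hIJ : I ≤ J) (hJ : J ≠ ⊤) {x : R} (hx : x ∈ J) : ¬IsUnit (Ideal.Quotient.mk I x) := by
  intro hu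
  have : Nontrivial (R ⧸ J) := Ideal.Quotient.nontrivial_iff.mpr hJ
  have hu' := hu.map (Ideal.Quotient.factor hIJ)
  rw [Ideal.Quotient.factor_mk, Ideal.Quotient.eq_zero_iff_mem.mpr hx] at hu'
  exact not_isUnit_zero hu'

theorem exists_valuationSubring_injective_not_isUnit {D : Type*} [CommRing D] [IsDomain D]
    {x : D} (hx : ¬IsUnit x) :
    ∃ (V : ValuationSubring (FractionRing D)) (φ : D →+* V),
      Function.Injective φ ∧ ¬IsUnit (φ x) := by
  obtain ⟨m, hm, hxm⟩ := (Ideal.span {x}).exists_le_maximal (Ideal.span_singleton_ne_top hx)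
  let g : Localization.AtPrime m →+* FractionRing D :=
    IsLocalization.map (T := nonZeroDivisors D) _ (RingHom.id D) m.primeCompl_le_nonZeroDivisors
  obtain ⟨V, hV, hloc⟩ := IsLocalRing.exists_factor_valuationRing g
  refine ⟨V, (g.codRestrict V.toSubring hV).comp (algebraMap D _), ?_, ?_⟩
  · have hcomp : g.comp (algebraMap D _) = algebraMap D (FractionRing D) :=
      IsLocalization.map_comp _
    have hinj : Function.Injective (g.comp (algebraMap D _)) :=
      hcomp ▸ IsFractionRing.injective D (FractionRing D)
    exact hinj.of_comp (f := Subtype.val)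
  · intro hu
    exact (IsLocalization.AtPrime.to_map_mem_maximal_iff _ m x).mpr
      (hxm (Ideal.mem_span_singleton_self x)) (hloc.map_nonunit _ hu)

/-- Let `f` be a nonzerodivisor of a commutative ring `A`.  If for every valuation ring `V`
and every ring homomorphism `φ : A → V` with `φ f ≠ 0` the element `φ f` is a unit of `V`,
then `f` is a unit of `A`. -/
theorem isUnit_of_forall_valuationRing_isUnit
    {A : Type u} [CommRing A] (f : A) (hf : f ∈ nonZeroDivisors A)
    (h : ∀ (V : Type u) [CommRing V] [IsDomain V] [ValuationRing V]
      (φ : A →+* V), φ f ≠ 0 → IsUnit (φ f)) :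
    IsUnit f := by
  by_contra hnf
  obtain ⟨m, hm, hfm⟩ := (Ideal.span {f}).exists_le_maximal (Ideal.span_singleton_ne_top hnf)
  obtain ⟨q, hq, hqm⟩ := Ideal.exists_minimalPrimes_le (bot_le : ⊥ ≤ m)
  have : q.IsPrime := hq.1.1
  have hfq : f ∉ q := fun hfq ↦ notMem_nonZeroDivisors_of_mem_mem_minimalPrimes hfq hq hf
  obtain ⟨V, φ, hφ, hφf⟩ := exists_valuationSubring_injective_not_isUnit
    (Ideal.Quotient.not_isUnit_mk_of_mem hqm hm.ne_top (hfm (Ideal.mem_span_singleton_self f)))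
  refine hφf (h V (φ.comp (Ideal.Quotient.mk q)) ?_)
  rwa [RingHom.comp_apply, ne_eq, map_eq_zero_iff φ hφ, Ideal.Quotient.eq_zero_iff_mem]
end

section
/- Let A be a commutative ring and f, g ∈ A nonzerodivisors with f dividing g. Suppose that for every valuation ring V and every ring homomorphism φ : A → V with φ(f) ≠ 0 and φ(g) ≠ 0, the principal ideals of V generated by φ(f) and by φ(g) coincide. Then the principal ideals (f) and (g) of A coincide. -/
/-!
Write `g = f * c`; it suffices that `c` is a unit. Otherwise `c` lies in a maximal ideal `m`,
which contains a minimal prime `p`. A valuation ring dominating the local domain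
`(A ⧸ p)` localized at `m` gives `φ : A → V` with kernel `p` sending `m` to nonunits. Since
nonzerodivisors avoid minimal primes, `φ f` and `φ g` are nonzero, and `(φ f) = (φ f * φ c)`
in the domain `V` forces `φ c` to be a unit.
-/

universe u

theorem IsLocalRing.exists_valuationRing_injective_isLocalHom (R : Type u) [CommRing R]
    [IsDomain R] [IsLocalRing R] :
    ∃ (V : Type u) (_ : CommRing V) (_ : IsDomain V) (_ : ValuationRing V) (ψ : R →+* V),
      Function.Injective ψ ∧ IsLocalHom ψ := by
  obtain ⟨B, hB, hψ⟩ := exists_factor_valuationRing (algebraMap R (FractionRing R))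
  exact ⟨B, inferInstance, inferInstance, inferInstance, (algebraMap R _).codRestrict _ hB,
    fun _ _ h ↦ IsFractionRing.injective R (FractionRing R) congr(($h).1), hψ⟩

theorem Ideal.exists_valuationRing_ker_eq_of_le {A : Type u} [CommRing A]
    {p q : Ideal A} [p.IsPrime] [q.IsPrime] (hpq : p ≤ q) :
    ∃ (V : Type u) (_ : CommRing V) (_ : IsDomain V) (_ : ValuationRing V) (φ : A →+* V),
      RingHom.ker φ = p ∧ ∀ x ∈ q, ¬IsUnit (φ x) := by
  let q' : Ideal (A ⧸ p) := q.map (Ideal.Quotient.mk p)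
  have : q'.IsPrime :=
    Ideal.map_isPrime_of_surjective Ideal.Quotient.mk_surjective (by rwa [Ideal.mk_ker])
  have : IsDomain (Localization.AtPrime q') :=
    IsLocalization.isDomain_localization q'.primeCompl_le_nonZeroDivisors
  obtain ⟨V, _, _, _, ψ, hψ, _⟩ :=
    IsLocalRing.exists_valuationRing_injective_isLocalHom (Localization.AtPrime q')
  have hinj : Function.Injective (ψ.comp (algebraMap (A ⧸ p) (Localization.AtPrime q'))) :=
    hψ.comp (IsLocalization.injective _ q'.primeCompl_le_nonZeroDivisors)
  refine ⟨V, inferInstance, inferInstance, inferInstance, (ψ.comp (algebraMap _ _)).comp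
    (Ideal.Quotient.mk p), by rw [RingHom.ker_comp_of_injective _ hinj, Ideal.mk_ker],
    fun x hx hunit ↦ ?_⟩
  have : algebraMap _ (Localization.AtPrime q') (Ideal.Quotient.mk p x) ∈
      IsLocalRing.maximalIdeal _ :=
    (IsLocalization.AtPrime.to_map_mem_maximal_iff _ q' _).mpr (Ideal.mem_map_of_mem _ hx)
  exact this (hunit.of_map ψ)

/-- Let `f, g` be nonzerodivisors of a commutative ring `A` with `f ∣ g`.  If for every
valuation ring `V` and every ring homomorphism `φ : A → V` with `φ f ≠ 0` and `φ g ≠ 0`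
the principal ideals `(φ f)` and `(φ g)` of `V` coincide, then `(f) = (g)` in `A`. -/
theorem span_singleton_eq_of_forall_valuationRing
    {A : Type u} [CommRing A] (f g : A)
    (hf : f ∈ nonZeroDivisors A) (hg : g ∈ nonZeroDivisors A)
    (hfg : f ∣ g)
    (h : ∀ (V : Type u) [CommRing V] [IsDomain V] [ValuationRing V]
      (φ : A →+* V), φ f ≠ 0 → φ g ≠ 0 →
        Ideal.span {φ f} = Ideal.span {φ g}) :
    Ideal.span {f} = Ideal.span {g} := by
  obtain ⟨c, rfl⟩ := hfg
  suffices IsUnit c from (Ideal.span_singleton_mul_right_unit this f).symm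
  by_contra hc
  obtain ⟨m, hm, hcm⟩ := exists_max_ideal_of_mem_nonunits hc
  obtain ⟨p, hp, hpm⟩ := Ideal.exists_minimalPrimes_le (bot_le : ⊥ ≤ m)
  have := hp.1.1
  obtain ⟨V, _, _, _, φ, hker, hφm⟩ := Ideal.exists_valuationRing_ker_eq_of_le hpm
  have hφ : ∀ x ∈ nonZeroDivisors A, φ x ≠ 0 := fun x hx hφx ↦
    Set.disjoint_right.mp (Ideal.disjoint_nonZeroDivisors_of_mem_minimalPrimes hp) hx
      (hker ▸ hφx)
  have hspan := h V φ (hφ f hf) (hφ _ hg)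
  rw [map_mul, Ideal.span_singleton_eq_span_singleton] at hspan
  exact hφm c hcm (isUnit_of_associated_mul hspan.symm (hφ f hf))
end

section
/- Let A be a commutative ring, 𝔭 a prime ideal of A, and f ∈ A an element with f ∉ 𝔭 and 𝔭 contained in the principal ideal (f). Let B be an A-algebra such that the image of f in B is a nonzerodivisor. Then the image of f in the quotient B/𝔭B (where 𝔭B denotes the ideal of B generated by the image of 𝔭) is a nonzerodivisor. -/
/-! Since `f ∉ 𝔭`, every `p = f a ∈ 𝔭` has `a ∈ 𝔭`, so `𝔭 = f 𝔭`; this survives extension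
to `B`, giving `𝔭B = f · 𝔭B`. If `f b ∈ 𝔭B`, then `f b = f y` with `y ∈ 𝔭B`, and cancelling
the nonzerodivisor `f` gives `b = y ∈ 𝔭B`. -/

namespace Ideal

theorem IsPrime.le_span_singleton_mul_self {A : Type*} [CommRing A] {P : Ideal A} (hP : P.IsPrime)
    {f : A} (hf : f ∉ P) (hPf : P ≤ span {f}) : P ≤ span {f} * P := by
  intro p hp
  obtain ⟨a, rfl⟩ := mem_span_singleton'.mp (hPf hp)
  have ha : a ∈ P := (hP.mem_or_mem hp).resolve_right hf
  rw [mul_comm a f]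
  exact mul_mem_mul (mem_span_singleton_self f) ha

theorem map_le_span_singleton_mul_map {A B : Type*} [CommRing A] [CommRing B] (φ : A →+* B)
    {I : Ideal A} {f : A} (hI : I ≤ span {f} * I) : I.map φ ≤ span {φ f} * I.map φ := by
  calc I.map φ ≤ (span {f} * I).map φ := map_mono hI
    _ = span {φ f} * I.map φ := by rw [Ideal.map_mul, map_span, Set.image_singleton]

theorem Quotient.mk_mem_nonZeroDivisors_of_le_span_singleton_mul {B : Type*} [CommRing B]
    {I : Ideal B} {f : B} (hf : f ∈ nonZeroDivisors B) (hI : I ≤ span {f} * I) :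
    Quotient.mk I f ∈ nonZeroDivisors (B ⧸ I) := by
  rw [mem_nonZeroDivisors_iff_right]
  intro x hx
  obtain ⟨b, rfl⟩ := Quotient.mk_surjective x
  rw [← map_mul, Quotient.eq_zero_iff_mem] at hx
  rw [Quotient.eq_zero_iff_mem]
  obtain ⟨y, hy, hfy⟩ := mem_span_singleton_mul.mp (hI hx)
  have hby : (b - y) * f = 0 := by linear_combination -hfy
  rwa [sub_eq_zero.mp (mem_nonZeroDivisors_iff_right.mp hf _ hby)]

end Ideal

/-- Let `𝔭` be a prime ideal of a commutative ring `A` and `f ∈ A` with `f ∉ 𝔭` and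
`𝔭 ⊆ (f)`.  If the image of `f` in an `A`-algebra `B` is a nonzerodivisor, then the image
of `f` in `B ⧸ 𝔭B` is a nonzerodivisor. -/
theorem nonZeroDivisor_quotient_of_mem_span
    {A B : Type*} [CommRing A] [CommRing B] [Algebra A B]
    (𝔭 : Ideal A) [𝔭.IsPrime] (f : A) (hf : f ∉ 𝔭) (h𝔭f : 𝔭 ≤ Ideal.span {f})
    (hB : algebraMap A B f ∈ nonZeroDivisors B) :
    Ideal.Quotient.mk (𝔭.map (algebraMap A B)) (algebraMap A B f) ∈
      nonZeroDivisors (B ⧸ 𝔭.map (algebraMap A B)) :=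
  Ideal.Quotient.mk_mem_nonZeroDivisors_of_le_span_singleton_mul hB <|
    Ideal.map_le_span_singleton_mul_map _ <|
      Ideal.IsPrime.le_span_singleton_mul_self ‹_› hf h𝔭f
end

section
/- Let 𝒪 be a commutative local ring with maximal ideal 𝔪 and residue field κ = 𝒪/𝔪, let R be a valuation subring of κ, and let A ⊆ 𝒪 be the preimage of R under the residue map 𝒪 → κ (so A is isomorphic to the fiber product R ×_κ 𝒪, and A is a local ring). If A is a henselian local ring, then 𝒪 is a henselian local ring. -/
/-!
Shift a root of `f` modulo `𝔪` to `0`, so that `f = m + u X + X² q` with `m ∈ 𝔪` and `u` a unit.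
Substituting `X ↦ (m / u) X` and dividing by `m` gives `1 + X + X² r` with `r` having all
coefficients in `𝔪 ⊆ A`, so this polynomial lives over `A`. Its reflection in degree `N` is monic
and reduces to `X^(N-1) (X + 1)`, which has the simple root `-1`; henselianity of `A` lifts it to a
unit root `z`, and `z⁻¹` is a root of `1 + X + X² r`.
-/

open Polynomial IsLocalRing

theorem Polynomial.comp_C_mul_X_eq_C_mul {S : Type*} [CommRing S] (p : S[X]) {c ε : S}
    (hc : p.coeff 1 * c = p.coeff 0) (hε : p.coeff 0 * ε = c ^ 2) :
    p.comp (C c * X) =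
      C (p.coeff 0) * (1 + X + X ^ 2 * (C ε * (divX (divX p)).comp (C c * X))) := by
  have hp : p = C (p.coeff 0) + C (p.coeff 1) * X + X ^ 2 * divX (divX p) := by
    conv_lhs => rw [← X_mul_divX_add p, ← X_mul_divX_add (divX p)]
    rw [coeff_divX, zero_add]
    ring
  conv_lhs => rw [hp]
  simp only [add_comp, mul_comp, C_comp, X_comp, pow_comp]
  linear_combination (norm := (simp only [map_mul, map_pow]; ring))
    X * congrArg C hc - X ^ 2 * (divX (divX p)).comp (C c * X) * congrArg C hε

theorem HenselianLocalRing.of_forall_exists_isRoot_one_add_X_add_X_sq_mul {R : Type*} [CommRing R]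
    [IsLocalRing R]
    (h : ∀ r : R[X], (∀ i, r.coeff i ∈ maximalIdeal R) → ∃ y, (1 + X + X ^ 2 * r).IsRoot y) :
    HenselianLocalRing R where
  is_henselian f _ a₀ hf := by
    rintro ⟨u, hu⟩
    set p := taylor a₀ f
    set c := f.eval a₀ * ↑u⁻¹
    have hc : c ∈ maximalIdeal R := Ideal.mul_mem_right _ _ hf
    have hscale := p.comp_C_mul_X_eq_C_mul (c := c) (ε := c * ↑u⁻¹)
      (by rw [taylor_coeff_one, taylor_coeff_zero, ← hu, mul_comm, Units.inv_mul_cancel_right])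
      (by rw [taylor_coeff_zero]; ring)
    obtain ⟨y, hy⟩ := h (C (c * ↑u⁻¹) * (divX (divX p)).comp (C c * X)) fun i ↦ by
      rw [coeff_C_mul]; exact Ideal.mul_mem_right _ _ (Ideal.mul_mem_right _ _ hc)
    refine ⟨a₀ + c * y, ?_, by rw [add_sub_cancel_left]; exact Ideal.mul_mem_right _ _ hc⟩
    have := congrArg (eval y) hscale
    rwa [eval_comp, eval_mul, eval_C, eval_X, taylor_eval, eval_mul, hy.eq_zero, mul_zero,
      add_comm] at this

theorem HenselianLocalRing.exists_isRoot_one_add_X_add_X_sq_mul {A : Type*} [CommRing A]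
    [HenselianLocalRing A] {r : A[X]} (hr : ∀ i, r.coeff i ∈ maximalIdeal A) :
    ∃ y, (1 + X + X ^ 2 * r).IsRoot y := by
  set g : A[X] := 1 + X + X ^ 2 * r
  set n := r.natDegree
  have hg : g.natDegree ≤ n + 2 := by
    unfold g
    compute_degree
    omega
  have hmonic : (g.reflect (n + 2)).Monic := by
    refine monic_of_natDegree_le_of_coeff_eq_one (n + 2) (natDegree_reflect_le.trans ?_) ?_
    · omega
    · simp [coeff_reflect, g]
  have hr0 : r.map (residue A) = 0 := by
    ext i; simpa [residue_eq_zero_iff] using hr i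
  have hmap : (g.reflect (n + 2)).map (residue A) = X ^ (n + 1) * (X + 1) := by
    have hX : reflect (n + 2) (X : (ResidueField A)[X]) = X ^ (n + 1) := by
      simpa [revAt_le] using reflect_monomial (R := ResidueField A) (n + 2) 1
    rw [← reflect_map]
    simp only [g, Polynomial.map_add, Polynomial.map_one, Polynomial.map_X, Polynomial.map_mul,
      Polynomial.map_pow, hr0, mul_zero, add_zero, reflect_add, reflect_one, hX]
    ring
  have hensel := (HenselianLocalRing.TFAE A).out 0 1
  obtain ⟨z, hz, hz1⟩ := hensel.mp ‹_› _ hmonic (-1)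
    (by simp [aeval_def, eval₂_eq_eval_map, hmap])
    (by simp [aeval_def, eval₂_eq_eval_map, ← derivative_map, hmap])
  obtain ⟨u, rfl⟩ : IsUnit z := (residue_ne_zero_iff_isUnit z).mp (by simp [hz1])
  refine ⟨↑u⁻¹, ?_⟩
  simpa using (eval₂_reflect_eq_zero_iff (RingHom.id A) (↑u⁻¹ : A) (n + 2) g hg).mp hz

theorem Subring.exists_isRoot_one_add_X_add_X_sq_mul {𝒪 : Type*} [CommRing 𝒪] [IsLocalRing 𝒪]
    (A : Subring 𝒪) [HenselianLocalRing A] (hA : ∀ x ∈ maximalIdeal 𝒪, x ∈ A) {r : 𝒪[X]}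
    (hr : ∀ i, r.coeff i ∈ maximalIdeal 𝒪) : ∃ y, (1 + X + X ^ 2 * r).IsRoot y := by
  obtain ⟨r, rfl⟩ : r ∈ lifts A.subtype :=
    (lifts_iff_coeff_lifts r).2 fun i ↦ ⟨⟨_, hA _ (hr i)⟩, rfl⟩
  have hr' (i : ℕ) : r.coeff i ∈ maximalIdeal A := by
    refine (mem_maximalIdeal _).2 fun hu ↦ (mem_maximalIdeal _).1 ?_ (hu.map A.subtype)
    simpa using hr i
  obtain ⟨y, hy⟩ := HenselianLocalRing.exists_isRoot_one_add_X_add_X_sq_mul hr'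
  exact ⟨y, by simpa using hy.map (f := A.subtype)⟩

/-- Let `𝒪` be a local ring with residue field `κ`, `R` a valuation subring of `κ`, and
`A ⊆ 𝒪` the preimage of `R` under the residue map (a semi-valuation ring).  If `A` is a
henselian local ring, then so is `𝒪`. -/
theorem henselianLocalRing_of_semivaluation_henselian
    {𝒪 : Type*} [CommRing 𝒪] [IsLocalRing 𝒪]
    (R : ValuationSubring (IsLocalRing.ResidueField 𝒪))
    (h : HenselianLocalRing (Subring.comap (IsLocalRing.residue 𝒪) R.toSubring)) :
    HenselianLocalRing 𝒪 := by
  have hA : ∀ x ∈ maximalIdeal 𝒪, x ∈ Subring.comap (residue 𝒪) R.toSubring := fun x hx ↦ by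
    rw [Subring.mem_comap, (residue_eq_zero_iff x).2 hx]
    exact zero_mem _
  exact HenselianLocalRing.of_forall_exists_isRoot_one_add_X_add_X_sq_mul fun r hr ↦
    Subring.exists_isRoot_one_add_X_add_X_sq_mul _ hA hr
end

section
/- Let A be a commutative ring, f ∈ A a nonzerodivisor, and A_f the localization of A away from f. Let (I_i)_{i ∈ ι} be a family of ideals of A_f whose intersection is contained in the nilradical of A_f. For each i, let J_i ⊆ A be the preimage of I_i under the localization map A → A_f. Then: (a) for each i, the image of f in A/J_i is a nonzerodivisor; and (b) the intersection of the J_i is contained in the nilradical of A. -/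
theorem Ideal.Quotient.mk_mem_nonZeroDivisors_of_isUnit_map {A B : Type*} [CommRing A]
    [CommRing B] (φ : A →+* B) (I : Ideal B) {a : A} (ha : IsUnit (φ a)) :
    Ideal.Quotient.mk (I.comap φ) a ∈ nonZeroDivisors (A ⧸ I.comap φ) := by
  rw [mem_nonZeroDivisors_iff_right]
  intro x hx
  obtain ⟨b, rfl⟩ := Ideal.Quotient.mk_surjective x
  rw [← map_mul, Ideal.Quotient.eq_zero_iff_mem, Ideal.mem_comap, map_mul,
    I.mul_unit_mem_iff_mem ha] at hx
  exact Ideal.Quotient.eq_zero_iff_mem.2 hx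

theorem Ideal.comap_nilradical_of_injective {A B : Type*} [CommSemiring A] [CommSemiring B]
    {φ : A →+* B} (hφ : Function.Injective φ) : (nilradical B).comap φ = nilradical A := by
  ext a
  rw [Ideal.mem_comap, mem_nilradical, mem_nilradical, IsNilpotent.map_iff hφ]

/-- Let `f` be a nonzerodivisor of a commutative ring `A` and `(I i)` a family of ideals of
the localization `A_f` whose intersection is contained in the nilradical.  Let `J i` be the
preimage of `I i` in `A`.  Then the image of `f` in each `A ⧸ J i` is a nonzerodivisor and
the intersection of the `J i` is contained in the nilradical of `A`. -/
theorem comap_ideals_of_localization_away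
    {A : Type*} [CommRing A] (f : A) (hf : f ∈ nonZeroDivisors A)
    {ι : Type*} (I : ι → Ideal (Localization.Away f))
    (hI : (⨅ i, I i) ≤ nilradical (Localization.Away f)) :
    (∀ i, Ideal.Quotient.mk (Ideal.comap (algebraMap A (Localization.Away f)) (I i)) f ∈
        nonZeroDivisors (A ⧸ Ideal.comap (algebraMap A (Localization.Away f)) (I i))) ∧
      (⨅ i, Ideal.comap (algebraMap A (Localization.Away f)) (I i)) ≤ nilradical A := by
  refine ⟨fun i => Ideal.Quotient.mk_mem_nonZeroDivisors_of_isUnit_map _ (I i)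
    (IsLocalization.Away.algebraMap_isUnit f), ?_⟩
  have hinj : Function.Injective (algebraMap A (Localization.Away f)) :=
    IsLocalization.injective _ (Submonoid.powers_le.2 hf)
  calc ⨅ i, (I i).comap (algebraMap A (Localization.Away f))
      = (⨅ i, I i).comap (algebraMap A (Localization.Away f)) := (Ideal.comap_iInf _ _).symm
    _ ≤ (nilradical (Localization.Away f)).comap (algebraMap A (Localization.Away f)) :=
      Ideal.comap_mono hI
    _ = nilradical A := Ideal.comap_nilradical_of_injective hinj
end

section
/- Let A be a commutative ring, f ∈ A, and A_f the localization of A away from f. Let B be an A_f-algebra which is finite as an A_f-module. Then there exists an A-subalgebra C of B (where A acts on B via A → A_f → B) such that C is finite as an A-module, the image of f in C becomes invertible in B, and the induced map from the localization C_f of C away from the image of f to B is an isomorphism of A-algebras. -/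
/-!
Every element of `B` is integral over `A_f`, so each of finitely many `A_f`-module generators of
`B` becomes integral over `A` after multiplication by a power of `f`. These rescaled generators
still span `B` over `A_f`, and the `A`-algebra `C` they generate is finite over `A`. Every
element of `B` lands in `C` after multiplication by a power of `f`; since `f` is invertible in
`B` and `C → B` is injective, this exhibits `B` as `C_f`.
-/

theorem Subalgebra.isLocalization_algebraMapSubmonoid {R B : Type*} [CommSemiring R]
    [CommSemiring B] [Algebra R B] (C : Subalgebra R B) (M : Submonoid R)
    (hunit : ∀ m : M, IsUnit (algebraMap R B m)) (hmem : ∀ b : B, ∃ m : M, m • b ∈ C) :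
    IsLocalization (Algebra.algebraMapSubmonoid C M) B where
  map_units := by
    rintro ⟨_, m, hm, rfl⟩
    exact hunit ⟨m, hm⟩
  surj b := by
    obtain ⟨m, hmb⟩ := hmem b
    refine ⟨(⟨m • b, hmb⟩, ⟨algebraMap R C m, m, m.2, rfl⟩), ?_⟩
    simp [Submonoid.smul_def, Algebra.smul_def, mul_comm]
  exists_of_eq h := ⟨1, by simpa using Subtype.ext h⟩

theorem exists_finite_subalgebra_forall_smul_mem {R : Type*} [CommRing R] (M : Submonoid R)
    (S : Type*) [CommRing S] [Algebra R S] [IsLocalization M S]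
    {B : Type*} [CommRing B] [Algebra S B] [Module.Finite S B] [Algebra R B]
    [IsScalarTower R S B] :
    ∃ C : Subalgebra R B, Module.Finite R C ∧ ∀ b : B, ∃ m : M, m • b ∈ C := by
  obtain ⟨s, hs⟩ := Module.Finite.fg_top (R := S) (M := B)
  choose m hm using fun x : B ↦
    (IsIntegral.of_finite S x).exists_multiple_integral_of_isLocalization M x
  set t : Set B := (fun x ↦ m x • x) '' s
  have hspan : Submodule.span S t = ⊤ := by
    refine eq_top_iff.2 (hs ▸ Submodule.span_le.2 fun x hx ↦ ?_)
    have hmx : m x • x ∈ Submodule.span S t := Submodule.subset_span ⟨x, hx, rfl⟩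
    rw [Submonoid.smul_def, ← algebraMap_smul S] at hmx
    exact (Submodule.smul_mem_iff_of_isUnit _ (IsLocalization.map_units S (m x))).1 hmx
  refine ⟨Algebra.adjoin R t, Algebra.finite_adjoin_of_finite_of_isIntegral
    (s.finite_toSet.image _) ?_, fun b ↦ ?_⟩
  · rintro _ ⟨x, -, rfl⟩
    exact hm x
  · obtain ⟨m', hm'⟩ :=
      multiple_mem_span_of_mem_localization_span M S t b (hspan ▸ Submodule.mem_top)
    exact ⟨m', Algebra.span_le_adjoin R t hm'⟩

/-- Let `A` be a commutative ring, `f ∈ A`, and `B` an algebra over the localization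
`A_f = Localization.Away f` which is finite as an `A_f`-module.  Then there is an
`A`-subalgebra `C ⊆ B` which is finite as an `A`-module, such that the image of `f`
is invertible in `B` and the induced map `C_f → B` is an isomorphism (i.e. `B` is the
localization of `C` away from the image of `f`). -/
theorem exists_finite_model_of_finite_over_localization
    {A : Type*} [CommRing A] (f : A)
    {B : Type*} [CommRing B] [Algebra (Localization.Away f) B]
    [Module.Finite (Localization.Away f) B]
    [Algebra A B] [IsScalarTower A (Localization.Away f) B] :
    ∃ C : Subalgebra A B, Module.Finite A C ∧ IsUnit (algebraMap A B f) ∧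
      IsLocalization.Away (⟨algebraMap A B f, C.algebraMap_mem f⟩ : C) B := by
  obtain ⟨C, hfin, hmem⟩ :=
    exists_finite_subalgebra_forall_smul_mem (.powers f) (Localization.Away f) (B := B)
  have hunit (m : Submonoid.powers f) : IsUnit (algebraMap A B m) := by
    rw [IsScalarTower.algebraMap_apply A (Localization.Away f) B]
    exact (IsLocalization.map_units _ m).map _
  refine ⟨C, hfin, hunit ⟨f, Submonoid.mem_powers f⟩, ?_⟩
  have := C.isLocalization_algebraMapSubmonoid _ hunit hmem
  rwa [Algebra.algebraMapSubmonoid_powers] at this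
end

section
/- Let V be a valuation ring with fraction field K, and let B be a nonzero K-algebra which is finite as a K-module. Then there exists a V-subalgebra C of B such that: C is finite as a V-module; C is flat (equivalently, torsion-free) as a V-module; the K-subalgebra of B generated by C is all of B (equivalently, the natural map C ⊗_V K → B is bijective); and the induced map Spec C → Spec V is surjective. -/
/-!
Choose a finite `K`-spanning set of `B`. Since `B` is algebraic over `V`, a single nonzero
`y ∈ V` makes every `y • x` integral over `V`; the `V`-algebra `C` generated by these elements
is then finite, it still generates `B` over `K` because `y` is a unit in `K`, and it is
torsion-free as a `V`-submodule of a `K`-vector space. Over a valuation ring (more generally a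
Bézout domain) torsion-free modules are flat, and lying over for the integral extension
`V ⊆ C` gives surjectivity on spectra.
-/

theorem Module.Flat.of_isTorsionFree_of_isBezout {R M : Type*} [CommRing R] [IsDomain R]
    [IsBezout R] [AddCommGroup M] [Module R M] [Module.IsTorsionFree R M] : Module.Flat R M :=
  Module.Flat.flat_iff_torsion_eq_bot_of_isBezout.mpr
    (Submodule.isTorsionFree_iff_torsion_eq_bot.mp inferInstance)

theorem Module.IsTorsionFree.of_isFractionRing (V K B : Type*) [CommRing V] [IsDomain V]
    [Field K] [Algebra V K] [IsFractionRing V K] [AddCommGroup B] [Module K B] [Module V B]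
    [IsScalarTower V K B] : Module.IsTorsionFree V B :=
  have : FaithfulSMul V K :=
    (faithfulSMul_iff_algebraMap_injective V K).mpr (IsFractionRing.injective V K)
  .trans_faithfulSMul V K B

theorem exists_finset_isIntegral_adjoin_eq_top (V K B : Type*) [CommRing V] [IsDomain V]
    [Field K] [Algebra V K] [IsFractionRing V K] [CommRing B] [Algebra K B] [Module.Finite K B]
    [Algebra V B] [IsScalarTower V K B] :
    ∃ s : Finset B, (∀ x ∈ s, IsIntegral V x) ∧ Algebra.adjoin K (s : Set B) = ⊤ := by
  classical
  obtain ⟨t, ht⟩ := Module.Finite.fg_top (R := K) (M := B)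
  have : Algebra.IsAlgebraic V K := IsLocalization.isAlgebraic K (nonZeroDivisors V)
  have : Algebra.IsAlgebraic V B := .trans V K B
  obtain ⟨y, hy, hint⟩ := Algebra.IsAlgebraic.exists_integral_multiples V t
  refine ⟨t.image (y • ·), by simpa using hint, eq_top_iff.mpr ?_⟩
  have hyK : algebraMap V K y ≠ 0 := IsFractionRing.to_map_eq_zero_iff.not.mpr hy
  calc ⊤ = Submodule.span K (t : Set B) := ht.symm
    _ ≤ Subalgebra.toSubmodule (Algebra.adjoin K _) := Submodule.span_le.mpr fun x hx => by
        have hyx : y • x ∈ Algebra.adjoin K (t.image (y • ·) : Set B) :=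
          Algebra.subset_adjoin (by simpa using ⟨x, hx, rfl⟩)
        have := Subalgebra.smul_mem _ hyx (algebraMap V K y)⁻¹
        rwa [← algebraMap_smul K y x, smul_smul, inv_mul_cancel₀ hyK, one_smul] at this

/-- Let `V` be a valuation ring with fraction field `K` and `B` a nonzero finite
`K`-algebra.  Then there is a `V`-subalgebra `C ⊆ B` which is finite and flat as a
`V`-module, generates `B` as a `K`-algebra, and such that `Spec C → Spec V` is
surjective. -/
theorem exists_finite_flat_surjective_model_over_valuationRing
    {V K B : Type*} [CommRing V] [IsDomain V] [ValuationRing V]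
    [Field K] [Algebra V K] [IsFractionRing V K]
    [CommRing B] [Nontrivial B] [Algebra K B] [Module.Finite K B]
    [Algebra V B] [IsScalarTower V K B] :
    ∃ C : Subalgebra V B, Module.Finite V C ∧ Module.Flat V C ∧
      Algebra.adjoin K (C : Set B) = ⊤ ∧
      Function.Surjective (PrimeSpectrum.comap (algebraMap V C)) := by
  obtain ⟨s, hint, hgen⟩ := exists_finset_isIntegral_adjoin_eq_top V K B
  have : Module.IsTorsionFree V B := .of_isFractionRing V K B
  have : Module.Finite V (Algebra.adjoin V (s : Set B)) :=
    Algebra.finite_adjoin_of_finite_of_isIntegral s.finite_toSet hint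
  refine ⟨Algebra.adjoin V s, this, .of_isTorsionFree_of_isBezout, ?_,
    Algebra.IsIntegral.comap_surjective _ _⟩
  rwa [Algebra.adjoin_adjoin_of_tower]
end

section
/- Let 𝒪 be a commutative local ring with maximal ideal 𝔪 and residue field κ = 𝒪/𝔪, let R be a valuation subring of κ, and let A ⊆ 𝒪 be the preimage of R under the residue map 𝒪 → κ. Let f ∈ A be an element whose image in 𝒪 is a unit (as happens when 𝒪 is the localization of A away from f). Then the set 𝔭 := { a ∈ A : a ∈ 𝔪 } is a prime ideal of A, f ∉ 𝔭, and 𝔭 is contained in the principal ideal f·A. -/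
/-- Let `𝒪` be a local ring with maximal ideal `𝔪` and residue field `κ`, `R` a valuation
subring of `κ`, and `A ⊆ 𝒪` the preimage of `R` under the residue map (a semi-valuation
ring).  Let `f ∈ A` be an element whose image in `𝒪` is a unit.  Then
`𝔭 := {a ∈ A : a ∈ 𝔪}` is a prime ideal of `A` not containing `f` and contained in the
principal ideal `f·A`. -/
theorem semivaluation_prime_ideal_basics
    {𝒪 : Type*} [CommRing 𝒪] [IsLocalRing 𝒪]
    (R : ValuationSubring (IsLocalRing.ResidueField 𝒪))
    (f : Subring.comap (IsLocalRing.residue 𝒪) R.toSubring)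
    (hf : IsUnit (f : 𝒪)) :
    ∃ 𝔭 : Ideal (Subring.comap (IsLocalRing.residue 𝒪) R.toSubring),
      (∀ a : Subring.comap (IsLocalRing.residue 𝒪) R.toSubring,
        a ∈ 𝔭 ↔ (a : 𝒪) ∈ IsLocalRing.maximalIdeal 𝒪) ∧
      𝔭.IsPrime ∧ f ∉ 𝔭 ∧ 𝔭 ≤ Ideal.span {f} := by
  set A := Subring.comap (IsLocalRing.residue 𝒪) R.toSubring
  refine ⟨Ideal.comap A.subtype (IsLocalRing.maximalIdeal 𝒪), fun a => Iff.rfl, ?_, ?_, ?_⟩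
  · exact Ideal.comap_isPrime _ _
  · intro h
    exact (IsLocalRing.mem_maximalIdeal _).mp h hf
  · intro a ha
    have ha' : (a : 𝒪) ∈ IsLocalRing.maximalIdeal 𝒪 := ha
    have hmem : ((hf.unit⁻¹ : 𝒪ˣ) : 𝒪) * (a : 𝒪) ∈ A := by
      have : IsLocalRing.residue 𝒪 (a : 𝒪) = 0 :=
        (IsLocalRing.residue_eq_zero_iff _).mpr ha'
      simp only [A, Subring.mem_comap, map_mul, this, mul_zero]
      exact zero_mem _
    rw [Ideal.mem_span_singleton]
    refine ⟨⟨_, hmem⟩, ?_⟩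
    ext
    push_cast
    rw [← mul_assoc, IsUnit.mul_val_inv, one_mul]
end
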